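/- Let S be a nonempty finite set, let μ : S → [0,∞), let δ ∈ (0,1), and for each integer i ≥ 1 and each x ∈ S let N_{i,x} be a Poisson random variable with mean 2^i·μ(x). Set δ_i := δ/(4·|S|·i²). Then with probability at least 1 − δ, for every i ≥ 1 and every x ∈ S the chain of inequalities Ū₋(2^i·μ(x), δ_i) ≤ U₋(N_{i,x}, δ_i) ≤ 2^i·μ(x) ≤ U₊(N_{i,x}, δ_i) ≤ Ū₊(2^i·μ(x), δ_i) holds. -/

import Mathlib

open MeasureTheory ProbabilityTheory Real
open scoped NNReal ENNReal

/-- Upper confidence bound: `U₊(N,δ) = 2·log(1/δ) + N + √(2·N·log(1/δ))`. -/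
noncomputable def Uplus (N δ : ℝ) : ℝ :=
  2 * Real.log (1 / δ) + N + Real.sqrt (2 * N * Real.log (1 / δ))

/-- Lower confidence bound: `U₋(N,δ) = max{0, N − √(2·N·log(1/δ))}`. -/
noncomputable def Uminus (N δ : ℝ) : ℝ :=
  max 0 (N - Real.sqrt (2 * N * Real.log (1 / δ)))

/-- Deterministic upper envelope: `Ū₊(μ,δ) = μ + (14/3)·log(1/δ) + 2·√(2·μ·log(1/δ))`. -/
noncomputable def UbarPlus (μ δ : ℝ) : ℝ :=
  μ + (14 / 3) * Real.log (1 / δ) + 2 * Real.sqrt (2 * μ * Real.log (1 / δ))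

/-- Deterministic lower envelope: `Ū₋(μ,δ) = max{0, μ − 2·√(2·μ·log(1/δ))}`. -/
noncomputable def UbarMinus (μ δ : ℝ) : ℝ :=
  max 0 (μ - 2 * Real.sqrt (2 * μ * Real.log (1 / δ)))


open scoped Nat

lemma mgf_hasSum (r : ℝ≥0) (θ : ℝ) :
    HasSum (fun n : ℕ ↦ Real.exp (θ * n) * poissonPMFReal r n)
      (Real.exp ((r : ℝ) * (Real.exp θ - 1))) := by
  have h : HasSum (fun n : ℕ ↦ ((r : ℝ) * Real.exp θ) ^ n / n !)
      (Real.exp ((r : ℝ) * Real.exp θ)) := by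
    rw [Real.exp_eq_exp_ℝ]
    exact NormedSpace.expSeries_div_hasSum_exp _
  have h2 := h.mul_left (Real.exp (-(r : ℝ)))
  have he : (fun n : ℕ ↦ Real.exp (-(r:ℝ)) * (((r : ℝ) * Real.exp θ) ^ n / n !))
      = fun n : ℕ ↦ Real.exp (θ * n) * poissonPMFReal r n := by
    ext n
    rw [poissonPMFReal, mul_pow, ← Real.exp_nat_mul, mul_comm (n:ℝ) θ]
    ring
  rw [he] at h2
  have e : Real.exp (-(r : ℝ)) * Real.exp ((r : ℝ) * Real.exp θ) = Real.exp ((r : ℝ) * (Real.exp θ - 1)) := by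
    rw [← Real.exp_add]
    ring_nf
  exact e ▸ h2

lemma poisson_chernoff (r : ℝ≥0) (θ a : ℝ) (s : Set ℕ)
    (hs : ∀ n ∈ s, θ * a ≤ θ * n) :
    poissonMeasure r s ≤ ENNReal.ofReal (Real.exp ((r : ℝ) * (Real.exp θ - 1) - θ * a)) := by
  have hmeas : MeasurableSet s := trivial
  have hPM : poissonMeasure r s = ∑' n, s.indicator (⇑(poissonPMF r)) n := by
    rw [poissonMeasure, Measure.sum_apply _ hmeas]
    congr 1; ext n
    rw [Measure.smul_apply, Measure.dirac_apply' _ hmeas, smul_eq_mul]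
    by_cases hn : n ∈ s
    · simp [hn, poissonPMF, poissonPMFReal]; rfl
    · simp [hn]
  rw [hPM]
  have hg : HasSum (fun n : ℕ ↦ Real.exp (θ * n - θ * a) * poissonPMFReal r n)
      (Real.exp ((r : ℝ) * (Real.exp θ - 1) - θ * a)) := by
    have h0 := (mgf_hasSum r θ).mul_left (Real.exp (-(θ * a)))
    have he : (fun n : ℕ ↦ Real.exp (-(θ * a)) * (Real.exp (θ * n) * poissonPMFReal r n))
        = fun n : ℕ ↦ Real.exp (θ * n - θ * a) * poissonPMFReal r n := by
      ext n; rw [← mul_assoc, ← Real.exp_add]; ring_nf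
    rw [he, ← Real.exp_add] at h0
    rwa [show (r : ℝ) * (Real.exp θ - 1) - θ * a = -(θ * a) + (r : ℝ) * (Real.exp θ - 1) by ring]
  calc ∑' n, s.indicator (⇑(poissonPMF r)) n
      ≤ ∑' n : ℕ, ENNReal.ofReal (Real.exp (θ * n - θ * a) * poissonPMFReal r n) := by
        refine ENNReal.tsum_le_tsum fun n ↦ ?_
        by_cases hn : n ∈ s
        · rw [Set.indicator_of_mem hn]
          have hc : (poissonPMF r) n = ENNReal.ofReal (poissonPMFReal r n) := rfl
          rw [hc]
          refine ENNReal.ofReal_le_ofReal ?_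
          have h1 : (1:ℝ) ≤ Real.exp (θ * n - θ * a) := by
            rw [← Real.exp_zero]
            exact Real.exp_le_exp.2 (by linarith [hs n hn])
          nlinarith [poissonPMFReal_nonneg (r := r) (n := n)]
        · rw [Set.indicator_of_notMem hn]
          exact zero_le
    _ = ENNReal.ofReal (Real.exp ((r : ℝ) * (Real.exp θ - 1) - θ * a)) := by
        rw [← hg.tsum_eq, ENNReal.ofReal_tsum_of_nonneg]
        · exact fun n ↦ mul_nonneg (Real.exp_nonneg _) poissonPMFReal_nonneg
        · exact hg.summable

lemma exp_neg_le_quadratic {u : ℝ} (hu : 0 ≤ u) :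
    Real.exp (-u) ≤ 1 - u + u ^ 2 / 2 := by
  have h1 : 1 + u + u ^ 2 / 2 ≤ Real.exp u := by
    have h := Real.sum_le_exp_of_nonneg hu 3
    have hsum : ∑ i ∈ Finset.range 3, u ^ i / i ! = 1 + u + u ^ 2 / 2 := by
      simp [Finset.sum_range_succ, Nat.factorial]
    linarith [hsum ▸ h]
  have h2 : (0:ℝ) < 1 + u + u ^ 2 / 2 := by positivity
  rw [Real.exp_neg]
  calc (Real.exp u)⁻¹ ≤ (1 + u + u ^ 2 / 2)⁻¹ := by
        exact inv_anti₀ h2 h1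
    _ ≤ 1 - u + u ^ 2 / 2 := by
        rw [inv_eq_one_div, div_le_iff₀ h2]
        nlinarith [sq_nonneg (u ^ 2)]

lemma two_mul_three_pow_le_factorial (n : ℕ) : 2 * 3 ^ n ≤ (n + 2)! := by
  induction n with
  | zero => simp [Nat.factorial]
  | succ k ih =>
    have : (k + 3)! = (k + 3) * (k + 2)! := rfl
    calc 2 * 3 ^ (k + 1) = 3 * (2 * 3 ^ k) := by ring
    _ ≤ 3 * (k + 2)! := by omega
    _ ≤ (k + 3) * (k + 2)! := by
        exact Nat.mul_le_mul_right _ (by omega)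
    _ = (k + 3)! := this.symm

lemma exp_bernstein {θ : ℝ} (h0 : 0 ≤ θ) (h3 : θ < 3) :
    Real.exp θ ≤ 1 + θ + θ ^ 2 / (2 * (1 - θ / 3)) := by
  have hf : HasSum (fun n : ℕ ↦ θ ^ n / n !) (Real.exp θ) := by
    rw [Real.exp_eq_exp_ℝ]; exact NormedSpace.expSeries_div_hasSum_exp _
  have htail : HasSum (fun n : ℕ ↦ θ ^ (n + 2) / (n + 2)!)
      (Real.exp θ - (1 + θ)) := by
    have := (hasSum_nat_add_iff' (f := fun n : ℕ ↦ θ ^ n / n !) 2).2 hf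
    simpa [Finset.sum_range_succ, Nat.factorial] using this
  have hr : θ / 3 < 1 := by linarith
  have hr0 : 0 ≤ θ / 3 := by linarith
  have hgeo : HasSum (fun n : ℕ ↦ θ ^ 2 / 2 * (θ / 3) ^ n)
      (θ ^ 2 / 2 * (1 - θ / 3)⁻¹) := by
    exact (hasSum_geometric_of_lt_one hr0 hr).mul_left _
  have hle : Real.exp θ - (1 + θ) ≤ θ ^ 2 / 2 * (1 - θ / 3)⁻¹ := by
    refine hasSum_le (fun n ↦ ?_) htail hgeo
    have hfac : (2 * 3 ^ n : ℝ) ≤ ((n + 2)! : ℝ) := by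
      exact_mod_cast two_mul_three_pow_le_factorial n
    have hfp : (0:ℝ) < ((n + 2)! : ℝ) := by positivity
    rw [div_le_iff₀ hfp]
    have : θ ^ (n + 2) = θ ^ 2 * θ ^ n := by ring
    rw [this]
    have h3p : (0:ℝ) < 3 ^ n := by positivity
    have : θ ^ 2 / 2 * (θ / 3) ^ n = θ ^ 2 * θ ^ n / (2 * 3 ^ n) := by
      rw [div_pow]; ring
    rw [this, div_mul_eq_mul_div, le_div_iff₀ (by positivity)]
    exact mul_le_mul_of_nonneg_left hfac (by positivity)
  have : θ ^ 2 / (2 * (1 - θ / 3)) = θ ^ 2 / 2 * (1 - θ / 3)⁻¹ := by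
    rw [div_mul_eq_div_div, div_eq_mul_inv]
  rw [this]; linarith

lemma key_upper (m L s : ℝ) (hm : 0 < m) (hL : 0 ≤ L) (hs0 : 0 ≤ s)
    (hs2 : s ^ 2 = 2 * m * L) :
    m * (Real.exp (3 * (2/3*L + s) / (3*m + (2/3*L + s))) - 1)
      - 3 * (2/3*L + s) / (3*m + (2/3*L + s)) * (m + (2/3*L + s)) ≤ -L := by
  set t : ℝ := 2/3*L + s with ht
  have ht0 : 0 ≤ t := by positivity
  have hD : (0:ℝ) < 3*m + t := by linarith
  set θ : ℝ := 3 * t / (3*m + t) with hθ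
  have hθ0 : 0 ≤ θ := by positivity
  have hθ3 : θ < 3 := by rw [hθ, div_lt_iff₀ hD]; linarith
  have hB := exp_bernstein hθ0 hθ3
  have hden : 1 - θ / 3 = 3 * m / (3*m + t) := by
    rw [hθ]; field_simp; ring
  have hfrac : θ ^ 2 / (2 * (1 - θ / 3)) = 3 * t ^ 2 / (2 * m * (3*m + t)) := by
    rw [hden, hθ]; field_simp
  have hval : m * (θ + 3 * t ^ 2 / (2 * m * (3*m + t))) - θ * (m + t)
      = -(3 * t ^ 2 / (2 * (3*m + t))) := by
    rw [hθ]; field_simp; ring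
  have hexp : 3 * t ^ 2 = L * (2 * (3*m + t)) + 2 * L * s := by
    linear_combination 3 * hs2 + (3*t + 3*s) * ht
  have hL2 : L ≤ 3 * t ^ 2 / (2 * (3*m + t)) := by
    rw [le_div_iff₀ (by linarith)]
    nlinarith [mul_nonneg hL hs0]
  have hstep : m * (Real.exp θ - 1) - θ * (m + t)
      ≤ m * (θ + θ ^ 2 / (2 * (1 - θ / 3))) - θ * (m + t) := by
    have := mul_le_mul_of_nonneg_left (by linarith [hB] : Real.exp θ - 1 ≤ θ + θ ^ 2 / (2 * (1 - θ / 3))) hm.le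
    linarith
  rw [hfrac] at hstep
  clear_value θ t
  linarith [hstep, hval, hL2]

lemma poisson_upper_tail (r : ℝ≥0) (L : ℝ) (hL : 0 ≤ L) :
    poissonMeasure r {n : ℕ | (r : ℝ) + (2/3*L + Real.sqrt (2 * r * L)) < (n : ℝ)}
      ≤ ENNReal.ofReal (Real.exp (-L)) := by
  have hm0 : (0:ℝ) ≤ r := r.coe_nonneg
  have hs0 : (0:ℝ) ≤ Real.sqrt (2 * r * L) := Real.sqrt_nonneg _
  rcases eq_or_lt_of_le hm0 with hm' | hm'
  · -- r = 0
    have hθmono : ∀ n ∈ {n : ℕ | (r : ℝ) + (2/3*L + Real.sqrt (2 * r * L)) < (n : ℝ)},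
        (3/2 : ℝ) * ((r : ℝ) + (2/3*L + Real.sqrt (2 * r * L))) ≤ (3/2) * n := fun n hn ↦ by
      have : (r : ℝ) + (2/3*L + Real.sqrt (2 * r * L)) < (n : ℝ) := hn
      linarith
    refine (poisson_chernoff r (3/2) _ _ hθmono).trans ?_
    refine ENNReal.ofReal_le_ofReal (Real.exp_le_exp.2 ?_)
    rw [← hm']
    norm_num
    linarith
  · -- r > 0
    have hs2 : (Real.sqrt (2 * r * L)) ^ 2 = 2 * r * L := Real.sq_sqrt (by positivity)
    have hkey := key_upper (r : ℝ) L (Real.sqrt (2 * r * L)) hm' hL hs0 hs2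
    have hmono : ∀ n ∈ {n : ℕ | (r : ℝ) + (2/3*L + Real.sqrt (2 * r * L)) < (n : ℝ)},
        3 * (2/3*L + Real.sqrt (2 * r * L)) / (3*(r:ℝ) + (2/3*L + Real.sqrt (2 * r * L)))
          * ((r : ℝ) + (2/3*L + Real.sqrt (2 * r * L)))
        ≤ 3 * (2/3*L + Real.sqrt (2 * r * L)) / (3*(r:ℝ) + (2/3*L + Real.sqrt (2 * r * L))) * n := fun n hn ↦ by
      have h1 : (r : ℝ) + (2/3*L + Real.sqrt (2 * r * L)) < (n : ℝ) := hn
      have h2 : (0:ℝ) ≤ 3 * (2/3*L + Real.sqrt (2 * r * L)) / (3*(r:ℝ) + (2/3*L + Real.sqrt (2 * r * L))) := by positivity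
      nlinarith
    refine (poisson_chernoff r _ _ _ hmono).trans ?_
    exact ENNReal.ofReal_le_ofReal (Real.exp_le_exp.2 (by linarith))

lemma poisson_lower_tail (r : ℝ≥0) (L : ℝ) (hL : 0 ≤ L) :
    poissonMeasure r {n : ℕ | (n : ℝ) < (r : ℝ) - Real.sqrt (2 * r * L)}
      ≤ ENNReal.ofReal (Real.exp (-L)) := by
  have hm0 : (0:ℝ) ≤ r := r.coe_nonneg
  have hs0 : (0:ℝ) ≤ Real.sqrt (2 * r * L) := Real.sqrt_nonneg _
  rcases eq_or_lt_of_le hm0 with hm' | hm'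
  · have hempty : {n : ℕ | (n : ℝ) < (r : ℝ) - Real.sqrt (2 * r * L)} = ∅ := by
      ext n
      simp only [Set.mem_setOf_eq, Set.mem_empty_iff_false, iff_false, not_lt]
      have : (r:ℝ) - Real.sqrt (2 * r * L) ≤ 0 := by linarith
      exact this.trans (Nat.cast_nonneg n)
    rw [hempty]
    simp
  · have hs2 : (Real.sqrt (2 * r * L)) ^ 2 = 2 * r * L := Real.sq_sqrt (by positivity)
    set s : ℝ := Real.sqrt (2 * r * L)
    set m : ℝ := (r : ℝ)
    have hmono : ∀ n ∈ {n : ℕ | (n : ℝ) < m - s},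
        (-(s/m)) * (m - s) ≤ (-(s/m)) * n := fun n hn ↦ by
      have h1 : (n : ℝ) < m - s := hn
      have h2 : 0 ≤ s / m := by positivity
      nlinarith
    refine (poisson_chernoff r (-(s/m)) (m - s) _ hmono).trans ?_
    refine ENNReal.ofReal_le_ofReal (Real.exp_le_exp.2 ?_)
    have hB := exp_neg_le_quadratic (u := s/m) (by positivity)
    have hq : m * ((1 - s/m + (s/m) ^ 2 / 2) - 1) - (-(s/m)) * (m - s) = -L := by
      field_simp
      linear_combination (-1) * hs2
    have hmul := mul_le_mul_of_nonneg_left (by linarith [hB] :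
      Real.exp (-(s/m)) - 1 ≤ (1 - s/m + (s/m) ^ 2 / 2) - 1) hm'.le
    linarith [hmul, hq]

lemma det_core {a b c : ℝ} (ha0 : 0 ≤ a) (hb0 : 0 ≤ b) (hc0 : 0 ≤ c)
    (hlow : b^2 - 2*b*c ≤ a^2) (hup : a^2 ≤ b^2 + (4/3)*c^2 + 2*b*c) :
    (max 0 (b^2 - 2*(2*b*c)) ≤ max 0 (a^2 - 2*a*c)) ∧
    (max 0 (a^2 - 2*a*c) ≤ b^2) ∧
    (b^2 ≤ 4*c^2 + a^2 + 2*a*c) ∧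
    (4*c^2 + a^2 + 2*a*c ≤ b^2 + (28/3)*c^2 + 2*(2*b*c)) := by
  have hab : a ≤ b + 2*c := by
    have h3 : a^2 ≤ (b+2*c)^2 := by nlinarith [mul_nonneg hb0 hc0, sq_nonneg c]
    calc a = Real.sqrt (a^2) := (Real.sqrt_sq ha0).symm
      _ ≤ Real.sqrt ((b+2*c)^2) := Real.sqrt_le_sqrt h3
      _ = b + 2*c := Real.sqrt_sq (by positivity)
  refine ⟨?_, ?_, ?_, ?_⟩
  · -- G1
    rcases le_or_gt (b^2 - 2*(2*b*c)) 0 with h | h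
    · exact max_le (le_max_left _ _) (h.trans (le_max_left _ _))
    · refine max_le (le_max_left _ _) (le_max_of_le_right ?_)
      rcases le_or_gt a b with hab' | hab'
      · nlinarith [mul_nonneg hc0 (sub_nonneg.2 hab')]
      · have hbc : 4*c < b := by nlinarith [mul_nonneg hb0 hc0]
        nlinarith [mul_nonneg (by linarith : (0:ℝ) ≤ (a - c) - (b - 2*c))
          (by linarith : (0:ℝ) ≤ (a - c) + (b - 2*c)), sq_nonneg c]
  · -- G2
    refine max_le (by positivity) ?_
    rcases le_or_gt a (2*c) with h2 | h2
    · nlinarith [mul_nonneg ha0 (by linarith : (0:ℝ) ≤ 2*c - a), sq_nonneg b]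
    · have hq2 : (Real.sqrt (b^2 + c^2))^2 = b^2 + c^2 := Real.sq_sqrt (by positivity)
      have hq0 : 0 ≤ Real.sqrt (b^2 + c^2) := Real.sqrt_nonneg _
      have hqb : b ≤ Real.sqrt (b^2 + c^2) := by
        calc b = Real.sqrt (b^2) := (Real.sqrt_sq hb0).symm
          _ ≤ _ := Real.sqrt_le_sqrt (by nlinarith [sq_nonneg c])
      have haq : a ≤ c + Real.sqrt (b^2 + c^2) := by
        have h3 : a^2 ≤ (c + Real.sqrt (b^2 + c^2))^2 := by
          nlinarith [mul_nonneg hc0 (sub_nonneg.2 hqb), sq_nonneg c]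
        calc a = Real.sqrt (a^2) := (Real.sqrt_sq ha0).symm
          _ ≤ Real.sqrt ((c + Real.sqrt (b^2 + c^2))^2) := Real.sqrt_le_sqrt h3
          _ = _ := Real.sqrt_sq (by positivity)
      nlinarith [mul_nonneg (by linarith : (0:ℝ) ≤ Real.sqrt (b^2 + c^2) - (a - c))
        (by linarith : (0:ℝ) ≤ Real.sqrt (b^2 + c^2) + (a - c))]
  · -- G3
    have hq2 : (Real.sqrt (a^2 + c^2))^2 = a^2 + c^2 := Real.sq_sqrt (by positivity)
    have hq0 : 0 ≤ Real.sqrt (a^2 + c^2) := Real.sqrt_nonneg _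
    have hqac : Real.sqrt (a^2 + c^2) ≤ a + c := by
      calc Real.sqrt (a^2 + c^2) ≤ Real.sqrt ((a+c)^2) :=
            Real.sqrt_le_sqrt (by nlinarith [mul_nonneg ha0 hc0])
        _ = a + c := Real.sqrt_sq (by positivity)
    have hbq : b ≤ c + Real.sqrt (a^2 + c^2) := by
      have h3 : b - c ≤ Real.sqrt (a^2 + c^2) := by
        calc b - c ≤ |b - c| := le_abs_self _
          _ = Real.sqrt ((b-c)^2) := (Real.sqrt_sq_eq_abs _).symm
          _ ≤ Real.sqrt (a^2 + c^2) := Real.sqrt_le_sqrt (by nlinarith)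
      linarith
    have hb2 : b^2 ≤ (c + Real.sqrt (a^2 + c^2))^2 := by
      exact pow_le_pow_left₀ hb0 hbq 2
    nlinarith [mul_le_mul_of_nonneg_left hqac hc0]
  · -- G4
    nlinarith [mul_nonneg hc0 (by linarith : (0:ℝ) ≤ b + 2*c - a)]

lemma det_chain {m L n : ℝ} (hm : 0 ≤ m) (hL : 0 ≤ L) (hn : 0 ≤ n)
    (hlow : m - Real.sqrt (2*m*L) ≤ n) (hup : n ≤ m + (2/3*L + Real.sqrt (2*m*L))) :
    (max 0 (m - 2*Real.sqrt (2*m*L)) ≤ max 0 (n - Real.sqrt (2*n*L))) ∧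
    (max 0 (n - Real.sqrt (2*n*L)) ≤ m) ∧
    (m ≤ 2*L + n + Real.sqrt (2*n*L)) ∧
    (2*L + n + Real.sqrt (2*n*L) ≤ m + 14/3*L + 2*Real.sqrt (2*m*L)) := by
  have hb2 : (Real.sqrt m)^2 = m := Real.sq_sqrt hm
  have ha2 : (Real.sqrt n)^2 = n := Real.sq_sqrt hn
  have hc2 : (Real.sqrt (L/2))^2 = L/2 := Real.sq_sqrt (by linarith)
  have hsm : Real.sqrt (2*m*L) = 2*(Real.sqrt m)*(Real.sqrt (L/2)) := by
    rw [show 2*m*L = (2*(Real.sqrt m)*(Real.sqrt (L/2)))^2 by rw [mul_pow, mul_pow, hb2, hc2]; ring]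
    exact Real.sqrt_sq (by positivity)
  have hsn : Real.sqrt (2*n*L) = 2*(Real.sqrt n)*(Real.sqrt (L/2)) := by
    rw [show 2*n*L = (2*(Real.sqrt n)*(Real.sqrt (L/2)))^2 by rw [mul_pow, mul_pow, ha2, hc2]; ring]
    exact Real.sqrt_sq (by positivity)
  have hLc : L = 2*(Real.sqrt (L/2))^2 := by rw [hc2]; ring
  obtain ⟨g1, g2, g3, g4⟩ := det_core (Real.sqrt_nonneg n) (Real.sqrt_nonneg m)
    (Real.sqrt_nonneg (L/2))
    (by rw [hb2, ha2]; rw [hsm] at hlow; linarith)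
    (by rw [hb2, ha2]; rw [hsm] at hup; nlinarith [hc2])
  rw [hb2, ha2] at g1 g2
  rw [hb2, ha2, hc2] at g3 g4
  rw [hsm, hsn]
  exact ⟨g1, g2, by linarith, by linarith⟩

lemma series_bound (δ : ℝ) (hδ : 0 ≤ δ) :
    ∑' i : ℕ, ENNReal.ofReal (δ / (2 * (i:ℝ)^2)) ≤ ENNReal.ofReal δ := by
  have hz : HasSum (fun i : ℕ ↦ (1:ℝ) / (i:ℝ)^2) (π^2/6) := hasSum_zeta_two
  have hg : HasSum (fun i : ℕ ↦ δ / (2 * (i:ℝ)^2)) (δ/2 * (π^2/6)) := by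
    have := hz.mul_left (δ/2)
    have e : (fun i : ℕ ↦ δ / (2 * (i:ℝ)^2)) = fun i : ℕ ↦ δ/2 * (1 / (i:ℝ)^2) := by
      funext i; ring
    rw [e]; exact this
  have heq : ∑' i : ℕ, ENNReal.ofReal (δ / (2 * (i:ℝ)^2))
      = ENNReal.ofReal (δ/2 * (π^2/6)) := by
    rw [← hg.tsum_eq, ENNReal.ofReal_tsum_of_nonneg]
    · intro i; positivity
    · exact hg.summable
  rw [heq]
  refine ENNReal.ofReal_le_ofReal ?_
  have hpi : π^2 < 12 := by nlinarith [Real.pi_lt_d2, Real.pi_pos]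
  nlinarith [mul_nonneg hδ (by linarith : (0:ℝ) ≤ 12 - π^2)]

/-- Union bound over all rounds `i ≥ 1` and points `x` in a nonempty finite set `S`:
if `N_{i,x} ~ Poisson(2^i·μ(x))` and `δ_i := δ/(4·|S|·i²)`, then with probability at
least `1 − δ`, for every `i ≥ 1` and every `x ∈ S`,
`Ū₋(2^i·μ(x), δ_i) ≤ U₋(N_{i,x}, δ_i) ≤ 2^i·μ(x) ≤ U₊(N_{i,x}, δ_i) ≤ Ū₊(2^i·μ(x), δ_i)`. -/
theorem good_event_probability {Ω : Type*} [MeasurableSpace Ω]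
    (P : Measure Ω) [IsProbabilityMeasure P]
    (S : Type*) [Fintype S] [Nonempty S]
    (μ : S → ℝ≥0) (δ : ℝ) (hδ : δ ∈ Set.Ioo (0 : ℝ) 1)
    (N : ℕ → S → Ω → ℕ) (hmeas : ∀ i x, Measurable (N i x))
    (hdist : ∀ i x, P.map (N i x) = poissonMeasure (2 ^ i * μ x)) :
    ENNReal.ofReal (1 - δ) ≤
      P {ω : Ω | ∀ i : ℕ, 1 ≤ i → ∀ x : S,
        UbarMinus (2 ^ i * (μ x : ℝ)) (δ / (4 * (Fintype.card S : ℝ) * (i : ℝ) ^ 2)) ≤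
          Uminus ((N i x ω : ℝ)) (δ / (4 * (Fintype.card S : ℝ) * (i : ℝ) ^ 2)) ∧
        Uminus ((N i x ω : ℝ)) (δ / (4 * (Fintype.card S : ℝ) * (i : ℝ) ^ 2)) ≤
          2 ^ i * (μ x : ℝ) ∧
        2 ^ i * (μ x : ℝ) ≤
          Uplus ((N i x ω : ℝ)) (δ / (4 * (Fintype.card S : ℝ) * (i : ℝ) ^ 2)) ∧
        Uplus ((N i x ω : ℝ)) (δ / (4 * (Fintype.card S : ℝ) * (i : ℝ) ^ 2)) ≤
          UbarPlus (2 ^ i * (μ x : ℝ)) (δ / (4 * (Fintype.card S : ℝ) * (i : ℝ) ^ 2))} := by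
  obtain ⟨hδ0, hδ1⟩ := hδ
  have hc1 : (1:ℝ) ≤ (Fintype.card S : ℝ) := by
    exact_mod_cast Fintype.card_pos
  set c : ℝ := (Fintype.card S : ℝ) with hc
  -- abbreviations
  set dd : ℕ → ℝ := fun i ↦ δ / (4 * c * (i:ℝ)^2) with hdd
  set Lf : ℕ → ℝ := fun i ↦ Real.log (1 / dd i) with hLf
  set r : ℕ → S → ℝ≥0 := fun i x ↦ 2 ^ i * μ x with hr
  have hdd_pos : ∀ i : ℕ, 1 ≤ i → 0 < dd i := by
    intro i hi
    have : (1:ℝ) ≤ (i:ℝ) := by exact_mod_cast hi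
    have h2 : 0 < 4 * c * (i:ℝ)^2 := by positivity
    exact div_pos hδ0 h2
  have hdd_lt : ∀ i : ℕ, 1 ≤ i → dd i < 1 := by
    intro i hi
    have h1 : (1:ℝ) ≤ (i:ℝ) := by exact_mod_cast hi
    rw [hdd, div_lt_one (by positivity)]
    nlinarith
  have hL_nonneg : ∀ i : ℕ, 1 ≤ i → 0 ≤ Lf i := by
    intro i hi
    refine Real.log_nonneg ?_
    rw [le_div_iff₀ (hdd_pos i hi), one_mul]
    exact (hdd_lt i hi).le
  have hexp : ∀ i : ℕ, 1 ≤ i → Real.exp (-(Lf i)) = dd i := by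
    intro i hi
    rw [hLf]
    simp only
    rw [Real.log_div one_ne_zero (ne_of_gt (hdd_pos i hi)), Real.log_one]
    rw [neg_sub, sub_zero, Real.exp_log (hdd_pos i hi)]
  -- bad events
  set Blow : ℕ → S → Set Ω := fun i x ↦
    N i x ⁻¹' {n : ℕ | (n : ℝ) < (r i x : ℝ) - Real.sqrt (2 * (r i x) * (Lf i))} with hBlow
  set Bup : ℕ → S → Set Ω := fun i x ↦
    N i x ⁻¹' {n : ℕ | (r i x : ℝ) + (2/3*(Lf i) + Real.sqrt (2 * (r i x) * (Lf i))) < (n : ℝ)}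
    with hBup
  set Bad : ℕ → Set Ω := fun i ↦ if 1 ≤ i then ⋃ x : S, (Blow i x ∪ Bup i x) else ∅ with hBad
  have hmeas_low : ∀ i x, MeasurableSet (Blow i x) := fun i x ↦ hmeas i x trivial
  have hmeas_up : ∀ i x, MeasurableSet (Bup i x) := fun i x ↦ hmeas i x trivial
  have hmeas_bad : ∀ i, MeasurableSet (Bad i) := by
    intro i
    simp only [hBad]
    by_cases hi : 1 ≤ i
    · simp only [if_pos hi]
      exact MeasurableSet.iUnion fun x ↦ (hmeas_low i x).union (hmeas_up i x)
    · simp only [if_neg hi]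
      exact MeasurableSet.empty
  -- probabilities of bad events
  have hPlow : ∀ i : ℕ, 1 ≤ i → ∀ x : S, P (Blow i x) ≤ ENNReal.ofReal (dd i) := by
    intro i hi x
    have hmap : P (Blow i x) = poissonMeasure (r i x)
        {n : ℕ | (n : ℝ) < (r i x : ℝ) - Real.sqrt (2 * (r i x) * (Lf i))} := by
      rw [hBlow]
      simp only
      rw [← hdist i x, Measure.map_apply (hmeas i x) trivial]
    rw [hmap, ← hexp i hi]
    exact poisson_lower_tail (r i x) (Lf i) (hL_nonneg i hi)
  have hPup : ∀ i : ℕ, 1 ≤ i → ∀ x : S, P (Bup i x) ≤ ENNReal.ofReal (dd i) := by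
    intro i hi x
    have hmap : P (Bup i x) = poissonMeasure (r i x)
        {n : ℕ | (r i x : ℝ) + (2/3*(Lf i) + Real.sqrt (2 * (r i x) * (Lf i))) < (n : ℝ)} := by
      rw [hBup]
      simp only
      rw [← hdist i x, Measure.map_apply (hmeas i x) trivial]
    rw [hmap, ← hexp i hi]
    exact poisson_upper_tail (r i x) (Lf i) (hL_nonneg i hi)
  have hPbad : ∀ i : ℕ, P (Bad i) ≤ ENNReal.ofReal (δ / (2 * (i:ℝ)^2)) := by
    intro i
    simp only [hBad]
    by_cases hi : 1 ≤ i
    · simp only [if_pos hi]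
      calc P (⋃ x : S, (Blow i x ∪ Bup i x))
          ≤ ∑ x : S, P (Blow i x ∪ Bup i x) := measure_iUnion_fintype_le _ _
        _ ≤ ∑ x : S, (ENNReal.ofReal (dd i) + ENNReal.ofReal (dd i)) := by
            refine Finset.sum_le_sum fun x _ ↦ ?_
            exact (measure_union_le _ _).trans (add_le_add (hPlow i hi x) (hPup i hi x))
        _ = (Fintype.card S) * (ENNReal.ofReal (dd i) + ENNReal.ofReal (dd i)) := by
            rw [Finset.sum_const, Finset.card_univ, nsmul_eq_mul]
        _ ≤ ENNReal.ofReal (δ / (2 * (i:ℝ)^2)) := by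
            rw [← ENNReal.ofReal_add (hdd_pos i hi).le (hdd_pos i hi).le]
            have hcard : ((Fintype.card S : ℕ) : ℝ≥0∞) = ENNReal.ofReal c := by
              rw [hc]; simp [ENNReal.ofReal_natCast]
            rw [hcard, ← ENNReal.ofReal_mul (by linarith : (0:ℝ) ≤ c)]
            refine ENNReal.ofReal_le_ofReal ?_
            have h1 : (1:ℝ) ≤ (i:ℝ) := by exact_mod_cast hi
            have hieq : c * (dd i + dd i) = δ / (2*(i:ℝ)^2) := by
              simp only [hdd]
              field_simp
              ring
            exact le_of_eq hieq
    · simp only [if_neg hi]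
      simp
  -- total bad probability
  have hPtotal : P (⋃ i, Bad i) ≤ ENNReal.ofReal δ := by
    calc P (⋃ i, Bad i) ≤ ∑' i, P (Bad i) := measure_iUnion_le _
      _ ≤ ∑' i : ℕ, ENNReal.ofReal (δ / (2 * (i:ℝ)^2)) := ENNReal.tsum_le_tsum hPbad
      _ ≤ ENNReal.ofReal δ := series_bound δ hδ0.le
  -- inclusion
  have hincl : (⋃ i, Bad i)ᶜ ⊆ {ω : Ω | ∀ i : ℕ, 1 ≤ i → ∀ x : S,
        UbarMinus (2 ^ i * (μ x : ℝ)) (dd i) ≤ Uminus ((N i x ω : ℝ)) (dd i) ∧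
        Uminus ((N i x ω : ℝ)) (dd i) ≤ 2 ^ i * (μ x : ℝ) ∧
        2 ^ i * (μ x : ℝ) ≤ Uplus ((N i x ω : ℝ)) (dd i) ∧
        Uplus ((N i x ω : ℝ)) (dd i) ≤ UbarPlus (2 ^ i * (μ x : ℝ)) (dd i)} := by
    intro ω hω i hi x
    simp only [Set.mem_compl_iff, Set.mem_iUnion, not_exists] at hω
    have hωi := hω i
    simp only [hBad, if_pos hi] at hωi
    have hnot : ω ∉ ⋃ x : S, (Blow i x ∪ Bup i x) := hωi
    simp only [Set.mem_iUnion, not_exists] at hnot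
    have hx := hnot x
    rw [Set.mem_union, not_or] at hx
    obtain ⟨hx1, hx2⟩ := hx
    rw [hBlow] at hx1
    rw [hBup] at hx2
    simp only [Set.mem_preimage, Set.mem_setOf_eq, not_lt] at hx1 hx2
    -- translate coercions
    have hcoe : ((r i x : ℝ≥0) : ℝ) = 2 ^ i * (μ x : ℝ) := by
      rw [hr]; push_cast; ring
    rw [hcoe] at hx1 hx2
    have hm0 : (0:ℝ) ≤ 2 ^ i * (μ x : ℝ) := by positivity
    have hn0 : (0:ℝ) ≤ (N i x ω : ℝ) := Nat.cast_nonneg _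
    obtain ⟨g1, g2, g3, g4⟩ := det_chain hm0 (hL_nonneg i hi) hn0
      (by linarith [hx1]) (by linarith [hx2])
    refine ⟨?_, ?_, ?_, ?_⟩
    · simpa [UbarMinus, Uminus, hLf] using g1
    · simpa [Uminus, hLf] using g2
    · simpa [Uplus, hLf] using g3
    · simpa [Uplus, UbarPlus, hLf] using g4
  -- conclude
  calc ENNReal.ofReal (1 - δ)
      = 1 - ENNReal.ofReal δ := by
        rw [ENNReal.ofReal_sub _ hδ0.le, ENNReal.ofReal_one]
    _ ≤ 1 - P (⋃ i, Bad i) := by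
        exact tsub_le_tsub_left hPtotal 1
    _ = P ((⋃ i, Bad i)ᶜ) := by
        rw [prob_compl_eq_one_sub (MeasurableSet.iUnion hmeas_bad)]
    _ ≤ _ := measure_mono hincl
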